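/- Let F and E be real inner product spaces, Θ ⊆ F a convex set, and f : F × E → ℝ with partial gradients ∇_θ f and ∇_w f such that ‖∇_w f(θ, w) − ∇_w f(θ', w)‖ ≤ L_wθ ‖θ − θ'‖ for all θ, θ' ∈ Θ and w ∈ E, with L_wθ > 0, and θ ↦ f(θ, w) is μ-strongly concave on Θ for every w ∈ E with μ > 0. Fix w ∈ E. Let n be a positive integer and, for each i ∈ {1, …, n}, let θᵢ* ∈ Θ satisfy ⟪∇_θ f(θᵢ*, w), θ − θᵢ*⟫ ≤ 0 for all θ ∈ Θ, and let θ̂ᵢ ∈ Θ satisfy ⟪θᵢ* − θ̂ᵢ, ∇_θ f(θ̂ᵢ, w)⟫ ≤ δ for some δ ≥ 0. Then ‖ (1/n) ∑_{i=1}^n ∇_w f(θ̂ᵢ, w) − (1/n) ∑_{i=1}^n ∇_w f(θᵢ*, w) ‖ ≤ L_wθ √(δ/μ). -/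

import Mathlib

/-!
Adding the strong-concavity inequality at `θ̂ᵢ` and at `θᵢ*` gives
`μ ‖θ̂ᵢ - θᵢ*‖² ≤ ⟪∇_θ f(θᵢ*) - ∇_θ f(θ̂ᵢ), θ̂ᵢ - θᵢ*⟫`, and the right side is at most `δ` by
optimality of `θᵢ*` and `δ`-optimality of `θ̂ᵢ`. Lipschitz continuity of `∇_w f` in `θ` then
bounds each term of the average by `L_wθ √(δ/μ)`.
-/

open RealInnerProductSpace Finset

section StrongConcavity

variable {F : Type*} [NormedAddCommGroup F] [InnerProductSpace ℝ F]
  {s : Set F} {g : F → ℝ} {G : F → F} {μ : ℝ}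

theorem mul_norm_sub_sq_le_inner_of_strongConcave
    (hg : ∀ x ∈ s, ∀ y ∈ s, g x - g y ≤ ⟪G y, x - y⟫ - μ / 2 * ‖x - y‖ ^ 2)
    {x y : F} (hx : x ∈ s) (hy : y ∈ s) :
    μ * ‖x - y‖ ^ 2 ≤ ⟪G y - G x, x - y⟫ := by
  have hxy := hg x hx y hy
  have hyx := hg y hy x hx
  rw [norm_sub_rev y x, ← neg_sub x y, inner_neg_right] at hyx
  rw [inner_sub_left]
  linarith

theorem norm_sub_le_sqrt_of_strongConcave_of_approx_maximizer
    (hg : ∀ x ∈ s, ∀ y ∈ s, g x - g y ≤ ⟪G y, x - y⟫ - μ / 2 * ‖x - y‖ ^ 2) (hμ : 0 < μ)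
    {xstar xhat : F} (hxstar : xstar ∈ s) (hxhat : xhat ∈ s) {δ : ℝ}
    (hopt : ⟪G xstar, xhat - xstar⟫ ≤ 0) (happrox : ⟪xstar - xhat, G xhat⟫ ≤ δ) :
    ‖xhat - xstar‖ ≤ √(δ / μ) := by
  have hmono := mul_norm_sub_sq_le_inner_of_strongConcave hg hxhat hxstar
  have hflip : ⟪G xhat, xhat - xstar⟫ = -⟪xstar - xhat, G xhat⟫ := by
    rw [real_inner_comm, ← inner_neg_left, neg_sub]
  rw [inner_sub_left, hflip] at hmono
  refine Real.le_sqrt_of_sq_le ((le_div_iff₀ hμ).2 ?_)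
  linarith

end StrongConcavity

theorem norm_average_sub_average_le {ι E : Type*} [Fintype ι] [SeminormedAddCommGroup E]
    [NormedSpace ℝ E] {a b : ι → E} {C : ℝ} (hC : 0 ≤ C) (hab : ∀ i, ‖a i - b i‖ ≤ C) :
    ‖(Fintype.card ι : ℝ)⁻¹ • ∑ i, a i - (Fintype.card ι : ℝ)⁻¹ • ∑ i, b i‖ ≤ C := by
  rcases isEmpty_or_nonempty ι with hι | hι
  · simpa using hC
  have hcard : (0 : ℝ) < Fintype.card ι := by exact_mod_cast Fintype.card_pos
  calc ‖(Fintype.card ι : ℝ)⁻¹ • ∑ i, a i - (Fintype.card ι : ℝ)⁻¹ • ∑ i, b i‖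
      = (Fintype.card ι : ℝ)⁻¹ * ‖∑ i, (a i - b i)‖ := by
        rw [← smul_sub, ← sum_sub_distrib, norm_smul, norm_inv, RCLike.norm_natCast]
    _ ≤ (Fintype.card ι : ℝ)⁻¹ * (Fintype.card ι * C) := by
        gcongr
        exact (norm_sum_le _ _).trans ((sum_le_sum fun i _ => hab i).trans_eq (by simp))
    _ = C := by field_simp

theorem approx_stochastic_gradient_gap_general
    {F E : Type*} [NormedAddCommGroup F] [InnerProductSpace ℝ F]
    [NormedAddCommGroup E] [InnerProductSpace ℝ E]
    (Θ : Set F)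
    (f : F → E → ℝ) (gradθ : F → E → F) (gradw : F → E → E)
    (Lwθ μ : ℝ) (hLwθ : 0 < Lwθ) (hμ : 0 < μ)
    (hLip : ∀ θ ∈ Θ, ∀ θ' ∈ Θ, ∀ w : E, ‖gradw θ w - gradw θ' w‖ ≤ Lwθ * ‖θ - θ'‖)
    (hconc : ∀ (w : E), ∀ θ₁ ∈ Θ, ∀ θ₂ ∈ Θ,
      f θ₁ w - f θ₂ w ≤ ⟪gradθ θ₂ w, θ₁ - θ₂⟫ - μ / 2 * ‖θ₁ - θ₂‖ ^ 2)
    (w : E) (n : ℕ)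
    (θstar θhat : Fin n → F)
    (hθstar : ∀ i, θstar i ∈ Θ) (hθhat : ∀ i, θhat i ∈ Θ)
    (hopt : ∀ i, ∀ θ ∈ Θ, ⟪gradθ (θstar i) w, θ - θstar i⟫ ≤ 0)
    (δ : ℝ)
    (happrox : ∀ i, ⟪θstar i - θhat i, gradθ (θhat i) w⟫ ≤ δ) :
    ‖(n : ℝ)⁻¹ • ∑ i, gradw (θhat i) w - (n : ℝ)⁻¹ • ∑ i, gradw (θstar i) w‖ ≤
      Lwθ * Real.sqrt (δ / μ) := by
  have hgap : ∀ i, ‖gradw (θhat i) w - gradw (θstar i) w‖ ≤ Lwθ * √(δ / μ) := fun i =>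
    (hLip _ (hθhat i) _ (hθstar i) w).trans <| mul_le_mul_of_nonneg_left
      (norm_sub_le_sqrt_of_strongConcave_of_approx_maximizer (hconc w) hμ (hθstar i) (hθhat i)
        (hopt i _ (hθhat i)) (happrox i)) hLwθ.le
  simpa using norm_average_sub_average_le (by positivity) hgap

/-- Lemma 2: the averaged `w`-gradients at `δ`-approximate maximizers
differ from those at the exact maximizers by at most `L_wθ √(δ/μ)`. -/
theorem approx_stochastic_gradient_gap
    {F E : Type*} [NormedAddCommGroup F] [InnerProductSpace ℝ F]
    [NormedAddCommGroup E] [InnerProductSpace ℝ E]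
    (Θ : Set F) (hΘ : Convex ℝ Θ)
    (f : F → E → ℝ) (gradθ : F → E → F) (gradw : F → E → E)
    (hdiffθ : ∀ (w : E) (θ : F), HasFDerivAt (fun θ' => f θ' w) (innerSL ℝ (gradθ θ w)) θ)
    (hdiffw : ∀ (θ : F) (w : E), HasFDerivAt (fun w' => f θ w') (innerSL ℝ (gradw θ w)) w)
    (Lwθ μ : ℝ) (hLwθ : 0 < Lwθ) (hμ : 0 < μ)
    (hLip : ∀ θ ∈ Θ, ∀ θ' ∈ Θ, ∀ w : E, ‖gradw θ w - gradw θ' w‖ ≤ Lwθ * ‖θ - θ'‖)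
    (hconc : ∀ (w : E), ∀ θ₁ ∈ Θ, ∀ θ₂ ∈ Θ,
      f θ₁ w - f θ₂ w ≤ ⟪gradθ θ₂ w, θ₁ - θ₂⟫ - μ / 2 * ‖θ₁ - θ₂‖ ^ 2)
    (w : E) (n : ℕ) (hn : 0 < n)
    (θstar θhat : Fin n → F)
    (hθstar : ∀ i, θstar i ∈ Θ) (hθhat : ∀ i, θhat i ∈ Θ)
    (hopt : ∀ i, ∀ θ ∈ Θ, ⟪gradθ (θstar i) w, θ - θstar i⟫ ≤ 0)
    (δ : ℝ) (hδ : 0 ≤ δ)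
    (happrox : ∀ i, ⟪θstar i - θhat i, gradθ (θhat i) w⟫ ≤ δ) :
    ‖(n : ℝ)⁻¹ • ∑ i, gradw (θhat i) w - (n : ℝ)⁻¹ • ∑ i, gradw (θstar i) w‖ ≤
      Lwθ * Real.sqrt (δ / μ) :=
  approx_stochastic_gradient_gap_general Θ f gradθ gradw Lwθ μ hLwθ hμ hLip hconc w n θstar θhat
    hθstar hθhat hopt δ happrox
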